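/- arXiv:1506.03279 — 2 statements merged into one kernel-verified Lean document; each statement's English description precedes it below -/
import Mathlib

section
/- Let θ > 0, let κₙ, κ : [0,θ] → ℝ be continuous with κₙ → κ uniformly on [0,θ], and let uₙ and u be the solutions of w'' + κₙw = 0 and w'' + κw = 0 on [0,θ] with w(0) = 0, w'(0) = 1. Assume u(s) > 0 for all s ∈ (0,θ) and u(θ) = 0. Then for every t ∈ (0,1) and every M > 0 there exists N such that for all n ≥ N, either uₙ has a zero in (0,θ], or uₙ(tθ) > M·uₙ(θ). (Divergence of the distortion coefficients σ_{κₙ}^{(t)}(θ) to +∞ when the limit coefficient is degenerate at θ.) -/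
open Set

/-- `u` is a (twice continuously differentiable) solution of `u'' + κ·u = 0` on the set `s`,
with first and second derivative functions `u'` and `u''`. -/
def SturmSol (κ u u' u'' : ℝ → ℝ) (s : Set ℝ) : Prop :=
  (∀ t ∈ s, HasDerivWithinAt u (u' t) s t) ∧
  (∀ t ∈ s, HasDerivWithinAt u' (u'' t) s t) ∧
  ContinuousOn u'' s ∧
  (∀ t ∈ s, u'' t + κ t * u t = 0)

/-!
Grönwall's inequality for the first-order system `(u, u')' = (u', -κ u)` turns uniform
convergence `κₙ → κ` into uniform convergence `uₙ → u` on `[0, θ]`. Hence `M uₙ(θ) → M u(θ) = 0`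
while `uₙ(tθ) → u(tθ) > 0`, so eventually `M uₙ(θ) < uₙ(tθ)`.
-/

open Filter Topology NNReal

def sturmField (κ : ℝ → ℝ) (t : ℝ) (p : ℝ × ℝ) : ℝ × ℝ := (p.2, -(κ t * p.1))

theorem lipschitzWith_sturmField {κ : ℝ → ℝ} {t : ℝ} {K : ℝ≥0} (hK : |κ t| ≤ K) :
    LipschitzWith (max 1 K) (sturmField κ t) := by
  refine LipschitzWith.of_dist_le_mul fun p q => ?_
  simp only [sturmField, Prod.dist_eq, Real.dist_eq, NNReal.coe_max, NNReal.coe_one]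
  have hone := le_max_left (1 : ℝ) K
  apply max_le
  · exact (le_max_right _ _).trans (le_mul_of_one_le_left (by positivity) hone)
  · rw [show -(κ t * p.1) - -(κ t * q.1) = -(κ t * (p.1 - q.1)) by ring, abs_neg, abs_mul]
    exact mul_le_mul (hK.trans (le_max_right _ _)) (le_max_left _ _) (abs_nonneg _)
      (zero_le_one.trans hone)

theorem dist_sturmField (κ κ₁ : ℝ → ℝ) (t : ℝ) (p : ℝ × ℝ) :
    dist (sturmField κ t p) (sturmField κ₁ t p) = |κ t - κ₁ t| * |p.1| := by
  simp only [sturmField, Prod.dist_eq, Real.dist_eq, sub_self, abs_zero]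
  rw [max_eq_right (abs_nonneg _), ← abs_mul, ← abs_neg]
  congr 1
  ring

namespace SturmSol

variable {κ₁ u₁ u₁' u₁'' κ u u' u'' : ℝ → ℝ} {a b : ℝ}

theorem continuousOn {s : Set ℝ} (h : SturmSol κ u u' u'' s) : ContinuousOn u s :=
  fun t ht => (h.1 t ht).continuousWithinAt

theorem continuousOn_prod (h : SturmSol κ u u' u'' (Icc a b)) :
    ContinuousOn (fun x => (u x, u' x)) (Icc a b) :=
  h.continuousOn.prodMk fun t ht => (h.2.1 t ht).continuousWithinAt

theorem hasDerivWithinAt_sturmField (h : SturmSol κ u u' u'' (Icc a b)) {t : ℝ}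
    (ht : t ∈ Ico a b) :
    HasDerivWithinAt (fun x => (u x, u' x)) (sturmField κ t (u t, u' t)) (Ici t) t := by
  have htI := Ico_subset_Icc_self ht
  have hu'' : u'' t = -(κ t * u t) := eq_neg_of_add_eq_zero_left (h.2.2.2 t htI)
  simpa only [sturmField, ← hu''] using
    ((h.1 t htI).prodMk (h.2.1 t htI)).mono_of_mem_nhdsWithin (Icc_mem_nhdsGE_of_mem ht)

theorem abs_sub_le_gronwallBound (h₁ : SturmSol κ₁ u₁ u₁' u₁'' (Icc a b))
    (h : SturmSol κ u u' u'' (Icc a b)) (ha : u₁ a = u a) (ha' : u₁' a = u' a)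
    {K : ℝ≥0} {ε C : ℝ} (hK : ∀ t ∈ Icc a b, |κ₁ t| ≤ K)
    (hε : ∀ t ∈ Icc a b, |κ t - κ₁ t| ≤ ε) (hC : ∀ t ∈ Icc a b, |u t| ≤ C) :
    ∀ t ∈ Icc a b, |u₁ t - u t| ≤ gronwallBound 0 (max 1 K : ℝ≥0) (ε * C) (t - a) := by
  intro t ht
  have hexact : ∀ s ∈ Ico a b, dist (sturmField κ₁ s (u₁ s, u₁' s))
      (sturmField κ₁ s (u₁ s, u₁' s)) ≤ 0 := fun s _ => (dist_self _).le
  have happrox : ∀ s ∈ Ico a b, dist (sturmField κ s (u s, u' s))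
      (sturmField κ₁ s (u s, u' s)) ≤ ε * C := fun s hs => by
    have hsI := Ico_subset_Icc_self hs
    rw [dist_sturmField]
    exact mul_le_mul (hε s hsI) (hC s hsI) (abs_nonneg _) ((abs_nonneg _).trans (hε s hsI))
  have hgron := dist_le_of_approx_trajectories_ODE_of_mem (s := fun _ => univ) (δ := 0)
    (fun s hs => (lipschitzWith_sturmField (hK s (Ico_subset_Icc_self hs))).lipschitzOnWith)
    h₁.continuousOn_prod (fun s hs => h₁.hasDerivWithinAt_sturmField hs) hexact
    (fun _ _ => mem_univ _) h.continuousOn_prod (fun s hs => h.hasDerivWithinAt_sturmField hs)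
    happrox (fun _ _ => mem_univ _) (by simp [ha, ha']) t ht
  rw [zero_add] at hgron
  exact (le_max_left _ _).trans hgron

theorem tendstoUniformlyOn {ι : Type*} {l : Filter ι} {κs us us' us'' : ι → ℝ → ℝ}
    (hκ : ContinuousOn κ (Icc a b)) (hκs : TendstoUniformlyOn κs κ l (Icc a b))
    (hus : ∀ i, SturmSol (κs i) (us i) (us' i) (us'' i) (Icc a b))
    (hu : SturmSol κ u u' u'' (Icc a b)) (ha : ∀ i, us i a = u a) (ha' : ∀ i, us' i a = u' a) :
    TendstoUniformlyOn us u l (Icc a b) := by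
  rw [Metric.tendstoUniformlyOn_iff]
  intro ε hε
  obtain ⟨Cκ, hCκ⟩ := isCompact_Icc.exists_bound_of_continuousOn hκ
  obtain ⟨C, hC⟩ := isCompact_Icc.exists_bound_of_continuousOn hu.continuousOn
  set K : ℝ≥0 := (Cκ + 1).toNNReal
  set L : ℝ := ((max 1 K : ℝ≥0) : ℝ)
  have hsmall : Tendsto (fun δ => gronwallBound 0 L (δ * C.toNNReal) (b - a)) (𝓝[>] 0) (𝓝 0) := by
    have hcont : Continuous fun δ : ℝ => gronwallBound 0 L (δ * C.toNNReal) (b - a) :=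
      (gronwallBound_continuous_ε 0 L (b - a)).comp (continuous_mul_const _)
    simpa [gronwallBound_ε0_δ0] using (hcont.tendsto 0).mono_left nhdsWithin_le_nhds
  obtain ⟨δ, hδε, hδ, hδ1⟩ := ((hsmall.eventually (gt_mem_nhds hε)).and
    (Ioo_mem_nhdsGT one_pos)).exists
  filter_upwards [Metric.tendstoUniformlyOn_iff.mp hκs δ hδ] with i hi x hx
  have hKi : ∀ t ∈ Icc a b, |κs i t| ≤ K := fun t ht => by
    have hκt : |κ t| ≤ Cκ := hCκ t ht
    have hclose : |κ t - κs i t| < δ := hi t ht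
    have := abs_sub_abs_le_abs_sub (κs i t) (κ t)
    rw [abs_sub_comm] at this
    exact (by linarith : |κs i t| ≤ Cκ + 1).trans (Real.le_coe_toNNReal _)
  calc dist (u x) (us i x) = |us i x - u x| := by rw [Real.dist_eq, abs_sub_comm]
    _ ≤ gronwallBound 0 L (δ * C.toNNReal) (x - a) :=
      (hus i).abs_sub_le_gronwallBound hu (ha i) (ha' i) hKi (fun t ht => (hi t ht).le)
        (fun t ht => (hC t ht).trans (Real.le_coe_toNNReal C)) x hx
    _ ≤ gronwallBound 0 L (δ * C.toNNReal) (b - a) :=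
      gronwallBound_mono le_rfl (by positivity) (by positivity) (by linarith [hx.2])
    _ < ε := hδε

end SturmSol

theorem distortion_divergence_general
    (θ : ℝ) (hθ : 0 < θ)
    (κn : ℕ → ℝ → ℝ) (κ : ℝ → ℝ)
    (hκ : ContinuousOn κ (Icc 0 θ))
    (hconv : TendstoUniformlyOn κn κ Filter.atTop (Icc 0 θ))
    (un un' un'' : ℕ → ℝ → ℝ) (u u' u'' : ℝ → ℝ)
    (hun : ∀ n, SturmSol (κn n) (un n) (un' n) (un'' n) (Icc 0 θ))
    (hu : SturmSol κ u u' u'' (Icc 0 θ))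
    (hun0 : ∀ n, un n 0 = 0) (hun'0 : ∀ n, un' n 0 = 1)
    (hu0 : u 0 = 0) (hu'0 : u' 0 = 1)
    (hupos : ∀ s ∈ Ioo 0 θ, 0 < u s) (huθ : u θ = 0) :
    ∀ t ∈ Ioo (0:ℝ) 1, ∀ M > (0:ℝ), ∃ N : ℕ, ∀ n ≥ N,
      (∃ s ∈ Ioc 0 θ, un n s = 0) ∨ M * un n θ < un n (t * θ) := by
  intro t ht M _
  have htθ : t * θ ∈ Ioo 0 θ := ⟨mul_pos ht.1 hθ, mul_lt_of_lt_one_left hθ ht.2⟩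
  have hlim := SturmSol.tendstoUniformlyOn hκ hconv hun hu (fun n => (hun0 n).trans hu0.symm)
    (fun n => (hun'0 n).trans hu'0.symm)
  have hlimθ : Tendsto (fun n => M * un n θ) atTop (𝓝 0) := by
    simpa [huθ] using (hlim.tendsto_at (right_mem_Icc.2 hθ.le)).const_mul M
  obtain ⟨N, hN⟩ := eventually_atTop.mp <|
    hlimθ.eventually_lt (hlim.tendsto_at (Ioo_subset_Icc_self htθ)) (hupos _ htθ)
  exact ⟨N, fun n hn => Or.inr (hN n hn)⟩

/-- Divergence of the distortion coefficients `σ_{κₙ}^{(t)}(θ)` to `+∞` when the limit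
coefficient is degenerate at `θ`. -/
theorem distortion_divergence
    (θ : ℝ) (hθ : 0 < θ)
    (κn : ℕ → ℝ → ℝ) (κ : ℝ → ℝ)
    (hκn : ∀ n, ContinuousOn (κn n) (Icc 0 θ)) (hκ : ContinuousOn κ (Icc 0 θ))
    (hconv : TendstoUniformlyOn κn κ Filter.atTop (Icc 0 θ))
    (un un' un'' : ℕ → ℝ → ℝ) (u u' u'' : ℝ → ℝ)
    (hun : ∀ n, SturmSol (κn n) (un n) (un' n) (un'' n) (Icc 0 θ))
    (hu : SturmSol κ u u' u'' (Icc 0 θ))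
    (hun0 : ∀ n, un n 0 = 0) (hun'0 : ∀ n, un' n 0 = 1)
    (hu0 : u 0 = 0) (hu'0 : u' 0 = 1)
    (hupos : ∀ s ∈ Ioo 0 θ, 0 < u s) (huθ : u θ = 0) :
    ∀ t ∈ Ioo (0:ℝ) 1, ∀ M > (0:ℝ), ∃ N : ℕ, ∀ n ≥ N,
      (∃ s ∈ Ioc 0 θ, un n s = 0) ∨ M * un n θ < un n (t * θ) :=
  distortion_divergence_general θ hθ κn κ hκ hconv un un' un'' u u' u'' hun hu hun0 hun'0 hu0 hu'0
    hupos huθ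
end

section
/- Let k, k' : [0,1] → ℝ be continuous and let N, N' > 1. Let f, g, h : [0,1] → ℝ be solutions on [0,1] of f'' + (k/(N−1))f = 0, g'' + (k'/(N'−1))g = 0 and h'' + ((k+k')/(N+N'−1))h = 0 respectively, each with value 0 at 0 and value 1 at 1, and each positive on (0,1]. Then t·f(t)^{N−1}·g(t)^{N'−1} ≥ h(t)^{N+N'−1} for all t ∈ [0,1]. (Multiplicativity inequality τ_{k,N}^{(t)}(θ)^N · τ_{k',N'}^{(t)}(θ)^{N'} ≥ τ_{k+k',N+N'}^{(t)}(θ)^{N+N'} for the modified distortion coefficients τ_{k,N}^{(t)} = t^{1/N}·σ_{k,N−1}^{(t)}{}^{(N−1)/N}.) -/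
open Set

/-!
Write `L = N + N' - 1`. The function `w = (t f^(N-1) g^(N'-1))^(1/L)` is the weighted geometric
mean `τ^(N/L) g^((N'-1)/L)` of `g` and `τ = τ_{k,N} = t^(1/N) f^((N-1)/N)`, itself a weighted
geometric mean of `t` and `f`. For the logarithmic derivative `p = u'/u`, the equation
`u'' + κ u = 0` becomes the Riccati equation `p' + p² + κ = 0`; by convexity of the square, a
weighted geometric mean of positive solutions satisfies `p' + p² + (mean of the κ's) ≤ 0`, so `w`
is a supersolution of the equation solved by `h`. Sturm comparison then applies: the Wronskian
`h'w - hw'` is nondecreasing and tends to `0` at `0` (here `f'(0), g'(0) ≠ 0` by uniqueness for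
linear ODEs, so `w` vanishes like `t`), hence `h / w` is nondecreasing and `h ≤ w` follows from
`h 1 = w 1 = 1`.
-/

open Filter Topology

theorem Real.rpow_mul_rpow_rpow {x y : ℝ} (hx : 0 ≤ x) (hy : 0 ≤ y) (a b c : ℝ) :
    (x ^ a * y ^ b) ^ c = x ^ (a * c) * y ^ (b * c) := by
  rw [Real.mul_rpow (Real.rpow_nonneg hx a) (Real.rpow_nonneg hy b), ← Real.rpow_mul hx,
    ← Real.rpow_mul hy]

theorem HasDerivWithinAt.tendsto_div_sub {u : ℝ → ℝ} {u' a : ℝ}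
    (hu : HasDerivWithinAt u u' (Ioi a) a) (ha : u a = 0) :
    Tendsto (fun t => u t / (t - a)) (𝓝[>] a) (𝓝 u') := by
  refine ((hasDerivWithinAt_iff_tendsto_slope' (by simp)).mp hu).congr fun t => ?_
  simp [slope_def_field, ha]

theorem tendsto_sub_mul_div_of_hasDerivWithinAt {u u₁ : ℝ → ℝ} {a : ℝ}
    (hu : HasDerivWithinAt u (u₁ a) (Ioi a) a) (hu₁ : ContinuousWithinAt u₁ (Ioi a) a)
    (ha : u a = 0) (ha₁ : u₁ a ≠ 0) :
    Tendsto (fun t => (t - a) * (u₁ t / u t)) (𝓝[>] a) (𝓝 1) := by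
  have := hu₁.tendsto.div (hu.tendsto_div_sub ha) ha₁
  rw [div_self ha₁] at this
  refine this.congr fun t => ?_
  change u₁ t / (u t / (t - a)) = _
  rw [div_div_eq_mul_div]
  ring

theorem tendsto_wronskian_of_hasDerivWithinAt {h h₁ w p : ℝ → ℝ} {a c : ℝ}
    (hh : HasDerivWithinAt h (h₁ a) (Ioi a) a) (hh₁ : ContinuousWithinAt h₁ (Ioi a) a)
    (ha : h a = 0) (hw : Tendsto w (𝓝[>] a) (𝓝 0))
    (hp : Tendsto (fun t => (t - a) * p t) (𝓝[>] a) (𝓝 c)) :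
    Tendsto (fun t => w t * (h₁ t - h t * p t)) (𝓝[>] a) (𝓝 0) := by
  have := hw.mul (hh₁.tendsto.sub ((hh.tendsto_div_sub ha).mul hp))
  rw [zero_mul] at this
  refine this.congr' ?_
  filter_upwards [self_mem_nhdsWithin] with t (ht : a < t)
  have : t - a ≠ 0 := sub_ne_zero.mpr ht.ne'
  field_simp

/-- `p` stands for the logarithmic derivative `w'/w`: for positive `w` the Riccati inequality
`p' + p² + κ ≤ 0` is `w'' + κ w ≤ 0`. -/
def IsRiccatiSupersolutionAt (κ w p : ℝ → ℝ) (t : ℝ) : Prop :=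
  HasDerivAt w (p t * w t) t ∧ ∃ q, HasDerivAt p q t ∧ q + p t ^ 2 + κ t ≤ 0

theorem IsRiccatiSupersolutionAt.rpow_mul_rpow {κ μ u v p q : ℝ → ℝ} {t α β : ℝ}
    (hu : IsRiccatiSupersolutionAt κ u p t) (hv : IsRiccatiSupersolutionAt μ v q t)
    (hut : 0 < u t) (hvt : 0 < v t) (hα : 0 ≤ α) (hβ : 0 ≤ β) (hαβ : α + β = 1) :
    IsRiccatiSupersolutionAt (fun r => α * κ r + β * μ r) (fun r => u r ^ α * v r ^ β)
      (fun r => α * p r + β * q r) t := by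
  obtain ⟨hu', p', hp', hpκ⟩ := hu
  obtain ⟨hv', q', hq', hqμ⟩ := hv
  refine ⟨?_, α * p' + β * q', (hp'.const_mul α).add (hq'.const_mul β), ?_⟩
  · refine ((hu'.rpow_const (Or.inl hut.ne')).mul (hv'.rpow_const (Or.inl hvt.ne'))).congr_deriv ?_
    rw [Real.rpow_sub_one hut.ne', Real.rpow_sub_one hvt.ne']
    field_simp
  · -- convexity of the square: `(α p + β q)² = α p² + β q² - α β (p - q)²` when `α + β = 1`
    obtain rfl : β = 1 - α := by linarith
    nlinarith [mul_nonneg (mul_nonneg hα hβ) (sq_nonneg (p t - q t))]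

section Comparison

variable {κ h h₁ h₂ w p : ℝ → ℝ} {a b : ℝ}

theorem wronskian_nonneg
    (hh : ∀ t ∈ Ioo a b, HasDerivAt h (h₁ t) t) (hh₁ : ∀ t ∈ Ioo a b, HasDerivAt h₁ (h₂ t) t)
    (hsub : ∀ t ∈ Ioo a b, 0 ≤ h₂ t + κ t * h t) (hh₀ : ∀ t ∈ Ioo a b, 0 ≤ h t)
    (hw : ∀ t ∈ Ioo a b, IsRiccatiSupersolutionAt κ w p t) (hw₀ : ∀ t ∈ Ioo a b, 0 < w t)
    (hlim : Tendsto (fun t => w t * (h₁ t - h t * p t)) (𝓝[>] a) (𝓝 0)) :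
    ∀ t ∈ Ioo a b, 0 ≤ w t * (h₁ t - h t * p t) := by
  set W := fun s => w s * (h₁ s - h s * p s)
  have hderiv : ∀ t ∈ Ioo a b, ∃ W', HasDerivAt W W' t ∧ 0 ≤ W' := by
    intro t ht
    obtain ⟨hw', q, hq, hric⟩ := hw t ht
    refine ⟨_, hw'.mul ((hh₁ t ht).sub ((hh t ht).mul hq)), ?_⟩
    -- the derivative is `w (h₂ + κ h) - w h (q + p² + κ)`
    nlinarith [mul_nonneg (hw₀ t ht).le (hsub t ht),
      mul_nonneg (mul_nonneg (hw₀ t ht).le (hh₀ t ht)) (neg_nonneg.mpr hric)]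
  have hdiff : ∀ t ∈ Ioo a b, DifferentiableAt ℝ W t := fun t ht =>
    (hderiv t ht).choose_spec.1.differentiableAt
  have hmono : MonotoneOn W (Ioo a b) := by
    refine monotoneOn_of_deriv_nonneg (convex_Ioo a b)
      (fun t ht => (hdiff t ht).continuousAt.continuousWithinAt)
      (fun t ht => (hdiff t (interior_subset ht)).differentiableWithinAt) fun t ht => ?_
    obtain ⟨W', hW', hW'₀⟩ := hderiv t (interior_subset ht)
    rwa [hW'.deriv]
  intro t ht
  refine le_of_tendsto hlim ?_
  filter_upwards [Ioo_mem_nhdsGT ht.1] with s hs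
  exact hmono ⟨hs.1, hs.2.trans ht.2⟩ ht hs.2.le

theorem div_le_div_of_isRiccatiSupersolutionAt
    (hh : ∀ t ∈ Ioo a b, HasDerivAt h (h₁ t) t) (hh₁ : ∀ t ∈ Ioo a b, HasDerivAt h₁ (h₂ t) t)
    (hsub : ∀ t ∈ Ioo a b, 0 ≤ h₂ t + κ t * h t) (hh₀ : ∀ t ∈ Ioo a b, 0 ≤ h t)
    (hw : ∀ t ∈ Ioo a b, IsRiccatiSupersolutionAt κ w p t) (hw₀ : ∀ t ∈ Ioc a b, 0 < w t)
    (hhc : ContinuousOn h (Ioc a b)) (hwc : ContinuousOn w (Ioc a b))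
    (hlim : Tendsto (fun t => w t * (h₁ t - h t * p t)) (𝓝[>] a) (𝓝 0)) :
    ∀ t ∈ Ioc a b, h t / w t ≤ h b / w b := by
  have hW := wronskian_nonneg hh hh₁ hsub hh₀ hw (fun t ht => hw₀ t (Ioo_subset_Ioc_self ht)) hlim
  have hmono : MonotoneOn (fun t => h t / w t) (Ioc a b) := by
    refine monotoneOn_of_hasDerivWithinAt_nonneg (convex_Ioc a b)
      (f' := fun t => (h₁ t * w t - h t * (p t * w t)) / w t ^ 2)
      (hhc.div hwc fun t ht => (hw₀ t ht).ne') (fun t ht => ?_) fun t ht => ?_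
    · rw [interior_Ioc] at ht
      exact ((hh t ht).div (hw t ht).1 (hw₀ t (Ioo_subset_Ioc_self ht)).ne').hasDerivWithinAt
    · rw [interior_Ioc] at ht
      have hWt : h₁ t * w t - h t * (p t * w t) = w t * (h₁ t - h t * p t) := by ring
      exact div_nonneg (hWt ▸ hW t ht) (sq_nonneg _)
  intro t ht
  exact hmono ht (right_mem_Ioc.mpr (ht.1.trans_le ht.2)) ht.2

end Comparison

theorem SturmSol.continuousOn_s14 {κ u u₁ u₂ : ℝ → ℝ} {s : Set ℝ} (hu : SturmSol κ u u₁ u₂ s) :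
    ContinuousOn u s :=
  fun t ht => (hu.1 t ht).continuousWithinAt

theorem SturmSol.hasDerivAt {κ u u₁ u₂ : ℝ → ℝ} {s : Set ℝ} {t : ℝ}
    (hu : SturmSol κ u u₁ u₂ s) (hs : s ∈ 𝓝 t) :
    HasDerivAt u (u₁ t) t ∧ HasDerivAt u₁ (u₂ t) t :=
  ⟨(hu.1 t (mem_of_mem_nhds hs)).hasDerivAt hs, (hu.2.1 t (mem_of_mem_nhds hs)).hasDerivAt hs⟩

theorem SturmSol.eqOn_zero {κ u u₁ u₂ : ℝ → ℝ} {a b : ℝ} (hκ : ContinuousOn κ (Icc a b))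
    (hu : SturmSol κ u u₁ u₂ (Icc a b)) (ha : u a = 0) (ha₁ : u₁ a = 0) :
    EqOn u 0 (Icc a b) := by
  obtain ⟨hu', hu₁', -, hode⟩ := hu
  obtain ⟨C, hC⟩ := isCompact_Icc.exists_bound_of_continuousOn hκ
  set v : ℝ → ℝ × ℝ → ℝ × ℝ := fun t p => (p.2, -κ t • p.1)
  have hv : ∀ t ∈ Ico a b, LipschitzOnWith (max 1 ‖C‖₊) (v t) univ := by
    intro t ht
    have hκt : ‖-κ t‖₊ * 1 ≤ ‖C‖₊ := by
      rw [mul_one, nnnorm_neg, ← NNReal.coe_le_coe, coe_nnnorm, coe_nnnorm]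
      exact (hC t (Ico_subset_Icc_self ht)).trans (le_abs_self C)
    exact ((LipschitzWith.prod_snd.prodMk ((lipschitzWith_smul (-κ t)).comp
      LipschitzWith.prod_fst)).weaken (max_le_max le_rfl hκt)).lipschitzOnWith
  have hsol : ∀ t ∈ Ico a b,
      HasDerivWithinAt (fun s => (u s, u₁ s)) (v t (u t, u₁ t)) (Ici t) t := by
    intro t ht
    have hd := ((hu' t (Ico_subset_Icc_self ht)).prodMk
      (hu₁' t (Ico_subset_Icc_self ht))).mono_of_mem_nhdsWithin (Icc_mem_nhdsGE_of_mem ht)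
    simpa [v, eq_neg_of_add_eq_zero_left (hode t (Ico_subset_Icc_self ht))] using hd
  have hzero : ∀ t ∈ Ico a b, HasDerivWithinAt (fun _ => 0) (v t 0) (Ici t) t :=
    fun t _ => (hasDerivWithinAt_const t (Ici t) 0).congr_deriv (by ext <;> simp [v])
  have hcont : ContinuousOn (fun s => (u s, u₁ s)) (Icc a b) :=
    ContinuousOn.prodMk (fun t ht => (hu' t ht).continuousWithinAt)
      (fun t ht => (hu₁' t ht).continuousWithinAt)
  intro t ht
  simpa using congrArg Prod.fst <| ODE_solution_unique_of_mem_Icc_right hv hcont hsol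
    (fun _ _ => mem_univ _) continuousOn_const hzero (fun _ _ => mem_univ _) (by simp [ha, ha₁]) ht

theorem SturmSol.isRiccatiSupersolutionAt {κ u u₁ u₂ : ℝ → ℝ} {s : Set ℝ} {t : ℝ}
    (hu : SturmSol κ u u₁ u₂ s) (hs : s ∈ 𝓝 t) (hut : u t ≠ 0) :
    IsRiccatiSupersolutionAt κ u (fun r => u₁ r / u r) t := by
  obtain ⟨hu', hu₁'⟩ := hu.hasDerivAt hs
  refine ⟨by rwa [div_mul_cancel₀ _ hut], _, hu₁'.div hu' hut, le_of_eq ?_⟩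
  have hode := hu.2.2.2 t (mem_of_mem_nhds hs)
  field_simp
  linear_combination u t * hode

/-- The last field says that `w` vanishes at `0` like a power of `t`; it is what makes the
Wronskian of `w` with a solution vanishing at `0` tend to `0` there. -/
structure IsComparisonFunction (κ w p : ℝ → ℝ) : Prop where
  continuousOn_s14 : ContinuousOn w (Icc 0 1)
  apply_zero : w 0 = 0
  pos : ∀ t ∈ Ioc (0 : ℝ) 1, 0 < w t
  riccati : ∀ t ∈ Ioo (0 : ℝ) 1, IsRiccatiSupersolutionAt κ w p t
  tendsto_mul : ∃ c, Tendsto (fun t => t * p t) (𝓝[>] 0) (𝓝 c)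

namespace IsComparisonFunction

theorem id : IsComparisonFunction (fun _ => 0) (fun t => t) (fun t => t⁻¹) where
  continuousOn_s14 := continuousOn_id
  apply_zero := rfl
  pos _ ht := ht.1
  riccati t ht := by
    refine ⟨(hasDerivAt_id' t).congr_deriv (inv_mul_cancel₀ ht.1.ne').symm, _,
      hasDerivAt_inv ht.1.ne', le_of_eq ?_⟩
    rw [inv_pow]
    ring
  tendsto_mul := ⟨1, tendsto_const_nhds.congr' <| by
    filter_upwards [self_mem_nhdsWithin] with t (ht : 0 < t)
    exact (mul_inv_cancel₀ ht.ne').symm⟩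

theorem mono {κ ν w p : ℝ → ℝ} (hw : IsComparisonFunction κ w p)
    (hνκ : ∀ t ∈ Ioo (0 : ℝ) 1, ν t ≤ κ t) : IsComparisonFunction ν w p where
  __ := hw
  riccati t ht := by
    obtain ⟨hw', q, hq, hric⟩ := hw.riccati t ht
    exact ⟨hw', q, hq, by linarith [hνκ t ht]⟩

theorem rpow_mul_rpow {κ μ u v p q : ℝ → ℝ} {α β : ℝ} (hu : IsComparisonFunction κ u p)
    (hv : IsComparisonFunction μ v q) (hα : 0 ≤ α) (hβ : 0 ≤ β) (hαβ : α + β = 1) :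
    IsComparisonFunction (fun t => α * κ t + β * μ t) (fun t => u t ^ α * v t ^ β)
      (fun t => α * p t + β * q t) where
  continuousOn_s14 := (hu.continuousOn_s14.rpow_const fun _ _ => Or.inr hα).mul
    (hv.continuousOn_s14.rpow_const fun _ _ => Or.inr hβ)
  apply_zero := by
    rcases eq_or_ne α 0 with rfl | hα₀
    · simp [hu.apply_zero, hv.apply_zero, show β = 1 by linarith]
    · simp [hu.apply_zero, Real.zero_rpow hα₀]
  pos t ht := mul_pos (Real.rpow_pos_of_pos (hu.pos t ht) α)
    (Real.rpow_pos_of_pos (hv.pos t ht) β)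
  riccati t ht := (hu.riccati t ht).rpow_mul_rpow (hv.riccati t ht)
    (hu.pos t (Ioo_subset_Ioc_self ht)) (hv.pos t (Ioo_subset_Ioc_self ht)) hα hβ hαβ
  tendsto_mul := by
    obtain ⟨c, hc⟩ := hu.tendsto_mul
    obtain ⟨d, hd⟩ := hv.tendsto_mul
    exact ⟨α * c + β * d, ((hc.const_mul α).add (hd.const_mul β)).congr fun t => by ring⟩

end IsComparisonFunction

theorem SturmSol.isComparisonFunction {κ u u₁ u₂ : ℝ → ℝ} (hκ : ContinuousOn κ (Icc 0 1))
    (hu : SturmSol κ u u₁ u₂ (Icc 0 1)) (h₀ : u 0 = 0) (hpos : ∀ t ∈ Ioc (0 : ℝ) 1, 0 < u t) :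
    IsComparisonFunction κ u (fun t => u₁ t / u t) where
  continuousOn_s14 := hu.continuousOn_s14
  apply_zero := h₀
  pos := hpos
  riccati t ht := hu.isRiccatiSupersolutionAt (Icc_mem_nhds ht.1 ht.2)
    (hpos t (Ioo_subset_Ioc_self ht)).ne'
  tendsto_mul := by
    have h₀₁ : u₁ 0 ≠ 0 := fun h₀₁ => (hpos 1 (right_mem_Ioc.mpr one_pos)).ne'
      (hu.eqOn_zero hκ h₀ h₀₁ (right_mem_Icc.mpr zero_le_one))
    have hmem : Icc (0 : ℝ) 1 ∈ 𝓝[>] 0 := Icc_mem_nhdsGT one_pos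
    refine ⟨1, ?_⟩
    simpa using tendsto_sub_mul_div_of_hasDerivWithinAt
      ((hu.1 0 (left_mem_Icc.mpr zero_le_one)).mono_of_mem_nhdsWithin hmem)
      ((hu.2.1 0 (left_mem_Icc.mpr zero_le_one)).continuousWithinAt.mono_of_mem_nhdsWithin hmem)
      h₀ h₀₁

theorem SturmSol.div_le_div_of_isComparisonFunction {κ h h₁ h₂ w p : ℝ → ℝ}
    (hh : SturmSol κ h h₁ h₂ (Icc 0 1)) (h₀ : h 0 = 0) (hnonneg : ∀ t ∈ Ioo (0 : ℝ) 1, 0 ≤ h t)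
    (hw : IsComparisonFunction κ w p) :
    ∀ t ∈ Ioc (0 : ℝ) 1, h t / w t ≤ h 1 / w 1 := by
  have hmem : Icc (0 : ℝ) 1 ∈ 𝓝[>] 0 := Icc_mem_nhdsGT one_pos
  have hwc : Tendsto w (𝓝[>] 0) (𝓝 0) := by
    simpa [hw.apply_zero] using
      ((hw.continuousOn_s14 0 (left_mem_Icc.mpr zero_le_one)).mono_of_mem_nhdsWithin hmem).tendsto
  obtain ⟨c, hc⟩ := hw.tendsto_mul
  refine div_le_div_of_isRiccatiSupersolutionAt
    (fun t ht => (hh.hasDerivAt (Icc_mem_nhds ht.1 ht.2)).1)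
    (fun t ht => (hh.hasDerivAt (Icc_mem_nhds ht.1 ht.2)).2)
    (fun t ht => (hh.2.2.2 t (Ioo_subset_Icc_self ht)).symm.le) hnonneg hw.riccati hw.pos
    (hh.continuousOn_s14.mono Ioc_subset_Icc_self) (hw.continuousOn_s14.mono Ioc_subset_Icc_self)
    (tendsto_wronskian_of_hasDerivWithinAt (c := c)
      ((hh.1 0 (left_mem_Icc.mpr zero_le_one)).mono_of_mem_nhdsWithin hmem)
      ((hh.2.1 0 (left_mem_Icc.mpr zero_le_one)).continuousWithinAt.mono_of_mem_nhdsWithin hmem)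
      h₀ hwc (by simpa using hc))

/-- Multiplicativity inequality `τ_{k,N}^{(t)}{}^N · τ_{k',N'}^{(t)}{}^{N'} ≥
τ_{k+k',N+N'}^{(t)}{}^{N+N'}` for the modified distortion coefficients
`τ_{k,N}^{(t)} = t^{1/N}·(σ_{k,N−1}^{(t)})^{(N−1)/N}`. -/
theorem modified_distortion_multiplicative
    (k k' : ℝ → ℝ)
    (hk : ContinuousOn k (Icc 0 1)) (hk' : ContinuousOn k' (Icc 0 1))
    (N N' : ℝ) (hN : 1 < N) (hN' : 1 < N')
    (f f₁ f₂ g g₁ g₂ h h₁ h₂ : ℝ → ℝ)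
    (hf : SturmSol (fun t => k t / (N - 1)) f f₁ f₂ (Icc 0 1))
    (hg : SturmSol (fun t => k' t / (N' - 1)) g g₁ g₂ (Icc 0 1))
    (hh : SturmSol (fun t => (k t + k' t) / (N + N' - 1)) h h₁ h₂ (Icc 0 1))
    (hf0 : f 0 = 0) (hf1 : f 1 = 1) (hfpos : ∀ t ∈ Ioc (0:ℝ) 1, 0 < f t)
    (hg0 : g 0 = 0) (hg1 : g 1 = 1) (hgpos : ∀ t ∈ Ioc (0:ℝ) 1, 0 < g t)
    (hh0 : h 0 = 0) (hh1 : h 1 = 1) (hhpos : ∀ t ∈ Ioc (0:ℝ) 1, 0 < h t) :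
    ∀ t ∈ Icc (0:ℝ) 1, h t ^ (N + N' - 1) ≤ t * f t ^ (N - 1) * g t ^ (N' - 1) := by
  set L := N + N' - 1
  have hL : 0 < L := by linarith
  have hN₁ : N - 1 ≠ 0 := by linarith
  have hN₁' : N' - 1 ≠ 0 := by linarith
  have hτ := IsComparisonFunction.id.rpow_mul_rpow
    (hf.isComparisonFunction (hk.div_const _) hf0 hfpos) (α := 1 / N) (β := (N - 1) / N)
    (by positivity) (div_nonneg (by linarith) (by linarith)) (by field_simp; ring)
  have hw := (hτ.rpow_mul_rpow (hg.isComparisonFunction (hk'.div_const _) hg0 hgpos)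
    (α := N / L) (β := (N' - 1) / L) (by positivity) (div_nonneg (by linarith) hL.le)
    (by field_simp; ring)).mono (ν := fun t => (k t + k' t) / L)
    fun t _ => le_of_eq (by field_simp; ring)
  have hle := hh.div_le_div_of_isComparisonFunction hh0
    (fun t ht => (hhpos t (Ioo_subset_Ioc_self ht)).le) hw
  intro t ht
  rcases ht.1.eq_or_lt with rfl | ht₀
  · simp [hh0, Real.zero_rpow hL.ne']
  have ht' : t ∈ Ioc 0 1 := ⟨ht₀, ht.2⟩
  have hht := hle t ht'
  simp only [hh1, hf1, hg1, Real.one_rpow, mul_one, div_one] at hht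
  rw [div_le_one (hw.pos t ht')] at hht
  calc h t ^ L ≤ ((t ^ (1 / N) * f t ^ ((N - 1) / N)) ^ (N / L) * g t ^ ((N' - 1) / L)) ^ L :=
        Real.rpow_le_rpow (hhpos t ht').le hht hL.le
    _ = t * f t ^ (N - 1) * g t ^ (N' - 1) := by
      rw [Real.rpow_mul_rpow_rpow (hτ.pos t ht').le (hgpos t ht').le, div_mul_cancel₀ _ hL.ne',
        div_mul_cancel₀ _ hL.ne', Real.rpow_mul_rpow_rpow ht₀.le (hfpos t ht').le,
        one_div_mul_cancel (by linarith), div_mul_cancel₀ _ (by linarith), Real.rpow_one]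
end
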